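/- For every integer ℓ ≥ 1 there exist infinitely many odd integers n > 1 such that for every k with 1 ≤ k ≤ ℓ, the integer n - 2^k is not squarefree. Consequently, arbitrarily large least exponents k with n - 2^k squarefree are required as n ranges over the odd integers. -/

import Mathlib

/-! By the Chinese remainder theorem there are infinitely many `n` with `n ≡ 2 ^ k` modulo
`p_k ^ 2` for every `k ≤ ℓ`, where `p_0 = 2, p_1 = 3, …` are the primes in increasing order.
Then `p_k ^ 2 ∣ n - 2 ^ k` for `1 ≤ k ≤ ℓ`, and the case `k = 0` reads `n ≡ 1 [MOD 4]`,
so `n` is odd. -/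

open Filter Function

theorem not_squarefree_of_sq_dvd {R : Type*} [CommMonoid R] {p x : R} (hp : ¬IsUnit p)
    (h : p ^ 2 ∣ x) : ¬Squarefree x :=
  fun hx => hp (hx p (sq p ▸ h))

theorem Nat.frequently_forall_modEq {ι : Type*} {t : Finset ι} {s : ι → ℕ} (a : ι → ℕ)
    (hs : ∀ i ∈ t, s i ≠ 0) (pp : Set.Pairwise t (Nat.Coprime on s)) :
    ∃ᶠ n in atTop, ∀ i ∈ t, n ≡ a i [MOD s i] := by
  obtain ⟨n₀, hn₀⟩ := Nat.chineseRemainderOfFinset a s t hs pp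
  exact (Nat.frequently_modEq (Finset.prod_ne_zero_iff.mpr hs) n₀).mono fun n hn i hi =>
    (hn.of_dvd (Finset.dvd_prod_of_mem s hi)).trans (hn₀ i hi)

theorem pairwise_coprime_sq_nth_prime :
    Pairwise (Nat.Coprime on fun i => Nat.nth Nat.Prime i ^ 2) := fun i j hij =>
  Nat.Coprime.pow 2 2 <| (Nat.coprime_primes (Nat.prime_nth_prime i) (Nat.prime_nth_prime j)).mpr
    fun h => hij (Nat.nth_injective Nat.infinite_setOfPred_prime h)

theorem frequently_odd_and_not_squarefree_sub_two_pow (ℓ : ℕ) :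
    ∃ᶠ n : ℕ in atTop, Odd n ∧ ∀ k, 1 ≤ k → k ≤ ℓ → ¬Squarefree ((n : ℤ) - 2 ^ k) := by
  have hcrt := Nat.frequently_forall_modEq (t := Finset.range (ℓ + 1))
    (s := fun i => Nat.nth Nat.Prime i ^ 2) (2 ^ ·)
    (fun i _ => pow_ne_zero 2 (Nat.prime_nth_prime i).ne_zero)
    (pairwise_coprime_sq_nth_prime.set_pairwise _)
  refine hcrt.mono fun n hn => ⟨?_, fun k _ hkℓ => ?_⟩
  · have h4 : n ≡ 1 [MOD 4] := by
      simpa [Nat.nth_prime_zero_eq_two] using hn 0 (by simp)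
    exact Nat.odd_iff.mpr (by unfold Nat.ModEq at h4; omega)
  · have hk : n ≡ 2 ^ k [MOD Nat.nth Nat.Prime k ^ 2] :=
      hn k (Finset.mem_range.mpr (Nat.lt_succ_of_le hkℓ))
    refine not_squarefree_of_sq_dvd
      (Nat.prime_iff_prime_int.mp (Nat.prime_nth_prime k)).not_isUnit ?_
    exact_mod_cast (Nat.modEq_iff_dvd.mp hk.symm)

theorem infinitely_many_with_large_least_exponent_general (ℓ : ℕ) :
    {n : ℕ | Odd n ∧ 1 < n ∧
      ∀ k : ℕ, 1 ≤ k → k ≤ ℓ → ¬ Squarefree ((n : ℤ) - 2 ^ k)}.Infinite ∧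
    ∀ N : ℕ, ∃ n : ℕ, N < n ∧ Odd n ∧ 1 < n ∧
      ∀ k : ℕ, 1 ≤ k → Squarefree ((n : ℤ) - 2 ^ k) → ℓ < k := by
  have hinf : {n : ℕ | Odd n ∧ 1 < n ∧
      ∀ k : ℕ, 1 ≤ k → k ≤ ℓ → ¬ Squarefree ((n : ℤ) - 2 ^ k)}.Infinite :=
    Nat.frequently_atTop_iff_infinite.mp <|
      ((frequently_odd_and_not_squarefree_sub_two_pow ℓ).and_eventually
        (eventually_gt_atTop 1)).mono fun _ ⟨⟨hodd, hsq⟩, hn⟩ => ⟨hodd, hn, hsq⟩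
  refine ⟨hinf, fun N => ?_⟩
  obtain ⟨n, ⟨hodd, hn, hsq⟩, hNn⟩ := hinf.exists_gt N
  exact ⟨n, hNn, hodd, hn, fun k hk hk_sq => not_le.mp fun hkℓ => hsq k hk hkℓ hk_sq⟩

/-- For every `ℓ ≥ 1` there are infinitely many odd integers `n > 1` such that
`n - 2^k` is not squarefree for every `1 ≤ k ≤ ℓ`; consequently, arbitrarily large
least exponents `k` with `n - 2^k` squarefree are required. -/
theorem infinitely_many_with_large_least_exponent (ℓ : ℕ) (hℓ : 1 ≤ ℓ) :
    {n : ℕ | Odd n ∧ 1 < n ∧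
      ∀ k : ℕ, 1 ≤ k → k ≤ ℓ → ¬ Squarefree ((n : ℤ) - 2 ^ k)}.Infinite ∧
    ∀ N : ℕ, ∃ n : ℕ, N < n ∧ Odd n ∧ 1 < n ∧
      ∀ k : ℕ, 1 ≤ k → Squarefree ((n : ℤ) - 2 ^ k) → ℓ < k :=
  infinitely_many_with_large_least_exponent_general ℓ
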